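/- For every pair of scalars ζ with ζ ∉ {0,1}, the 4-dimensional Lie algebra L_R with brackets [H,E]=E, [H,A]=(1−ζ)A, [H,B]=ζB, [A,B]=E, [E,A]=[E,B]=0 is a Frobenius Lie algebra. -/

import Mathlib

/-!
Take `f` to be the coordinate functional of `E`. Its Kirillov form `(x, y) ↦ f ⁅x, y⁆` pairs `H`
with `E` and `A` with `B` (the only brackets with a component along `E`), so its Gram matrix in
the basis `H, A, B, E` is an antidiagonal matrix with determinant `1`.
-/

namespace LieAlgebra

variable {K L : Type*} [CommRing K] [LieRing L] [LieAlgebra K L]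

def kirillovForm (f : Module.Dual K L) : LinearMap.BilinForm K L :=
  (LieModule.toEnd K L L : L →ₗ[K] Module.End K L).compr₂ f

@[simp]
lemma kirillovForm_apply (f : Module.Dual K L) (x y : L) : kirillovForm f x y = f ⁅x, y⁆ :=
  rfl

end LieAlgebra

open LieAlgebra

theorem stmt5_general {K : Type} [Field K] {L : Type} [LieRing L] [LieAlgebra K L]
    (ζ : K) (b : Module.Basis (Fin 4) K L)
    (hHA : ⁅b 0, b 1⁆ = (1 - ζ) • b 1) (hHB : ⁅b 0, b 2⁆ = ζ • b 2)
    (hHE : ⁅b 0, b 3⁆ = b 3) (hAB : ⁅b 1, b 2⁆ = b 3)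
    (hEA : ⁅b 3, b 1⁆ = 0) (hEB : ⁅b 3, b 2⁆ = 0) :
    ∃ f : L →ₗ[K] K, ∀ x : L, (∀ y : L, f ⁅x, y⁆ = 0) → x = 0 := by
  have hGram : LinearMap.BilinForm.toMatrix b (kirillovForm (b.coord 3)) =
      !![0, 0, 0, 1; 0, 0, 1, 0; 0, -1, 0, 0; -1, 0, 0, 0] := by
    ext i j
    fin_cases i <;> fin_cases j <;>
      simp [LinearMap.BilinForm.toMatrix_apply, ← lie_skew (b 1) (b 0), ← lie_skew (b 2) (b 0),
        ← lie_skew (b 3) (b 0), ← lie_skew (b 2) (b 1), ← lie_skew (b 1) (b 3),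
        ← lie_skew (b 2) (b 3), hHA, hHB, hHE, hAB, hEA, hEB]
  have hdet : (LinearMap.BilinForm.toMatrix b (kirillovForm (b.coord 3))).det = 1 := by
    simp [hGram, Matrix.det_succ_row_zero, Fin.sum_univ_succ, Fin.succAbove]
    norm_num
  exact ⟨b.coord 3, (LinearMap.BilinForm.nondegenerate_of_det_ne_zero (kirillovForm (b.coord 3)) b
    (hdet ▸ one_ne_zero)).1⟩

theorem stmt5 {K : Type} [Field K] [CharZero K] {L : Type} [LieRing L] [LieAlgebra K L]
    (ζ : K) (hζ0 : ζ ≠ 0) (hζ1 : ζ ≠ 1) (b : Module.Basis (Fin 4) K L)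
    (hHA : ⁅b 0, b 1⁆ = (1 - ζ) • b 1) (hHB : ⁅b 0, b 2⁆ = ζ • b 2)
    (hHE : ⁅b 0, b 3⁆ = b 3) (hAB : ⁅b 1, b 2⁆ = b 3)
    (hEA : ⁅b 3, b 1⁆ = 0) (hEB : ⁅b 3, b 2⁆ = 0) :
    ∃ f : L →ₗ[K] K, ∀ x : L, (∀ y : L, f ⁅x, y⁆ = 0) → x = 0 :=
  stmt5_general ζ b hHA hHB hHE hAB hEA hEB
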